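/- If α ∈ ℂ^{m×2m} satisfies αα* = I_m and αJα* = 0, where J = ((0, −I_m), (I_m, 0)) ∈ ℂ^{2m×2m}, then α*αJ + Jα*α = J. -/

import Mathlib

/-!
`P = α*α` is the orthogonal projection onto the row space of `α`, of rank `m`, and `Q = J P J*`
is an orthogonal projection of the same rank. The hypothesis `αJα* = 0` says `PJP = 0`, so
`PQ = 0`: the two ranges are orthogonal, and since their ranks add up to `2m`, `P + Q = 1`.
Multiplying on the right by the unitary `J` gives `PJ + JP = J`.
-/

open Matrix
open scoped ComplexOrder

namespace Matrix

section StarOrdered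

variable {n R : Type*} [Fintype n]
  [PartialOrder R] [CommRing R] [StarRing R] [StarOrderedRing R] [NoZeroDivisors R]

theorem IsStarProjection.eq_zero_of_trace_eq_zero {P : Matrix n n R} (hP : IsStarProjection P)
    (h : P.trace = 0) : P = 0 := by
  rwa [← trace_conjTranspose_mul_self_eq_zero_iff, ← star_eq_conjTranspose,
    hP.isSelfAdjoint.star_eq, hP.isIdempotentElem.eq]

theorem IsStarProjection.add_eq_one_of_mul_eq_zero_of_trace [DecidableEq n] {P Q : Matrix n n R}
    (hP : IsStarProjection P) (hQ : IsStarProjection Q) (hPQ : P * Q = 0)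
    (htr : P.trace + Q.trace = Fintype.card n) : P + Q = 1 := by
  have hR : IsStarProjection (1 - (P + Q)) := (hP.add hQ hPQ).one_sub
  have : 1 - (P + Q) = 0 := hR.eq_zero_of_trace_eq_zero <| by
    rw [trace_sub, trace_add, trace_one, htr, sub_self]
  exact (sub_eq_zero.mp this).symm

end StarOrdered

section StarRing

variable {k n R : Type*} [Fintype k] [Fintype n] [CommRing R] [StarRing R]

theorem isStarProjection_conjTranspose_mul_self [DecidableEq k] {α : Matrix k n R}
    (h : α * αᴴ = 1) : IsStarProjection (αᴴ * α) where
  isIdempotentElem := by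
    rw [IsIdempotentElem, Matrix.mul_assoc, ← Matrix.mul_assoc α, h, Matrix.one_mul]
  isSelfAdjoint := isHermitian_conjTranspose_mul_self α

theorem IsStarProjection.unitary_conj [DecidableEq n] {P U : Matrix n n R}
    (hP : IsStarProjection P) (hU : U ∈ unitaryGroup n R) : IsStarProjection (U * P * Uᴴ) :=
  hP.map (Unitary.conjStarAlgAut ℕ _ ⟨U, hU⟩)

theorem trace_unitary_conj [DecidableEq n] (P : Matrix n n R) {U : Matrix n n R}
    (hU : U ∈ unitaryGroup n R) : (U * P * Uᴴ).trace = P.trace := by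
  rw [trace_mul_cycle, ← star_eq_conjTranspose, mem_unitaryGroup_iff'.mp hU, one_mul]

end StarRing

theorem fromBlocks_zero_neg_one_one_zero_mem_unitaryGroup (m : Type*) [Fintype m] [DecidableEq m]
    (R : Type*) [CommRing R] [StarRing R] :
    fromBlocks 0 (-1) 1 0 ∈ unitaryGroup (m ⊕ m) R := by
  rw [mem_unitaryGroup_iff, star_eq_conjTranspose]
  simp [fromBlocks_conjTranspose, fromBlocks_multiply, ← fromBlocks_one]

theorem conjTranspose_mul_self_mul_add_mul_conjTranspose_mul_self {k n R : Type*}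
    [Fintype k] [Fintype n] [DecidableEq k] [DecidableEq n]
    [PartialOrder R] [CommRing R] [StarRing R] [StarOrderedRing R] [NoZeroDivisors R]
    (hcard : Fintype.card n = Fintype.card k + Fintype.card k)
    {α : Matrix k n R} {U : Matrix n n R} (hU : U ∈ unitaryGroup n R)
    (h1 : α * αᴴ = 1) (h2 : α * U * αᴴ = 0) :
    αᴴ * α * U + U * (αᴴ * α) = U := by
  set P := αᴴ * α
  have hP : IsStarProjection P := isStarProjection_conjTranspose_mul_self h1
  have htrP : P.trace = Fintype.card k := by rw [trace_mul_comm, h1, trace_one]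
  have hPQ : P * (U * P * Uᴴ) = 0 :=
    calc P * (U * P * Uᴴ) = αᴴ * (α * U * αᴴ) * α * Uᴴ := by
          simp only [P, Matrix.mul_assoc]
      _ = 0 := by rw [h2, Matrix.mul_zero, Matrix.zero_mul, Matrix.zero_mul]
  have hsum : P + U * P * Uᴴ = 1 :=
    hP.add_eq_one_of_mul_eq_zero_of_trace (hP.unitary_conj hU) hPQ <| by
      rw [trace_unitary_conj P hU, htrP, hcard, Nat.cast_add]
  calc P * U + U * P = (P + U * P * Uᴴ) * U := by
        rw [add_mul, mul_assoc (U * P), ← star_eq_conjTranspose, mem_unitaryGroup_iff'.mp hU,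
          mul_one]
    _ = U := by rw [hsum, one_mul]

end Matrix

theorem statement1 (m : ℕ) (α : Matrix (Fin m) (Fin m ⊕ Fin m) ℂ)
    (J : Matrix (Fin m ⊕ Fin m) (Fin m ⊕ Fin m) ℂ)
    (hJ : J = Matrix.fromBlocks 0 (-1) 1 0)
    (h1 : α * αᴴ = 1)
    (h2 : α * J * αᴴ = 0) :
    αᴴ * α * J + J * (αᴴ * α) = J := by
  subst hJ
  exact conjTranspose_mul_self_mul_add_mul_conjTranspose_mul_self (by simp)
    (fromBlocks_zero_neg_one_one_zero_mem_unitaryGroup _ _) h1 h2
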